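/- arXiv:1803.04295 — 2 statements merged into one kernel-verified Lean document; each statement's English description precedes it below -/
import Mathlib

section
/- Let u ∈ BMOA(𝕋), H_u the anti-linear Hankel operator, K_u = S*H_u, and s > 0 with u not orthogonal to E_K(s) = Ker(K_u² - s²I). Then S(E_K(s) ∩ (K_u u)^⊥) = E_H(s), where E_H(s) = Ker(H_u² - s²I). -/
open MeasureTheory Complex Real ComplexConjugate AddCircle

noncomputable section

instance fact2pi : Fact (0 < 2 * π) := ⟨by positivity⟩

abbrev Tc : Type := AddCircle (2 * π)

abbrev haarT : Measure Tc := haarAddCircle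

abbrev HL2 : Type := Lp ℂ 2 haarT

def IsHardy (f : HL2) : Prop := ∀ n : ℤ, n < 0 → fourierCoeff (⇑f) n = 0

def IsHardyFun (u : Tc → ℂ) : Prop := ∀ n : ℤ, n < 0 → fourierCoeff u n = 0

def IsInnerF (θ : Tc → ℂ) : Prop :=
  AEStronglyMeasurable θ haarT ∧ (∀ᵐ x ∂haarT, ‖θ x‖ = 1) ∧ IsHardyFun θ

def IsHankelOp (u : Tc → ℂ) (H : HL2 → HL2) : Prop :=
  MemLp u 2 haarT ∧ IsHardyFun u ∧
  (∃ C : ℝ, ∀ f, ‖H f‖ ≤ C * ‖f‖) ∧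
  (∀ f g, H (f + g) = H f + H g) ∧
  (∀ (c : ℂ) (f : HL2), H (c • f) = conj c • H f) ∧
  (∀ f, IsHardy (H f)) ∧
  (∀ f g : HL2, IsHardy g →
    Integrable (fun x => u x * conj (f x) * conj (g x)) haarT →
    (inner ℂ g (H f) : ℂ) = ∫ x, u x * conj (f x) * conj (g x) ∂haarT)

def IsShiftAdjOf (H K : HL2 → HL2) : Prop :=
  ∀ f, IsHardy (K f) ∧
    ∀ n : ℤ, 0 ≤ n → fourierCoeff (⇑(K f)) n = fourierCoeff (⇑(H f)) (n + 1)

def IsSzego (P : HL2 →L[ℂ] HL2) : Prop :=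
  (∀ f, IsHardy (P f)) ∧ ∀ f g : HL2, IsHardy g → (inner ℂ g (f - P f) : ℂ) = 0

def MemKz (θ : Tc → ℂ) (f : HL2) : Prop :=
  IsHardy f ∧ ∀ h w : HL2, IsHardy h →
    (⇑w =ᵐ[haarT] fun x => fourier 1 x * θ x * h x) → (inner ℂ w f : ℂ) = 0

def MemK (θ : Tc → ℂ) (f : HL2) : Prop :=
  IsHardy f ∧ ∀ h w : HL2, IsHardy h →
    (⇑w =ᵐ[haarT] fun x => θ x * h x) → (inner ℂ w f : ℂ) = 0

/-!
With `e₀ = 1`, the Fourier coefficients give `H_u v = S K_u v + ⟪v, u⟫ e₀`, hence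
`H_u² = K_u² + ⟪u, ·⟫ u`; moreover `⟪a, H_u b⟫ = ⟪b, H_u a⟫` on the Hardy space, and the same
holds for `K_u`. Pairing `H_u² f = s² f + ⟪u, f⟫ u` (for `f ∈ E_K(s)` with `⟪u, f⟫ ≠ 0`) with
`w ∈ E_H(s)` gives `⟪u, f⟫ ⟪w, u⟫ = 0`, so `E_H(s) ⊥ u`.
If `g ∈ E_H(s)`, then `w = H_u g ∈ E_H(s)`, so `s² g = H_u w = S K_u w` and `g = S h` with
`h = s⁻² K_u w`, where `K_u h = H_u S h = w`; this puts `h` in `E_K(s) ∩ (K_u u)^⊥`.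
Conversely, for such `h` we have `K_u h ⊥ u`, so `H_u² S h = H_u K_u h = S K_u² h = s² S h`.
-/

open scoped InnerProductSpace

namespace HardyShift

lemma fourierCoeff_eq_inner (v : HL2) (n : ℤ) : fourierCoeff (⇑v) n = ⟪fourierLp 2 n, v⟫_ℂ := by
  rw [← fourierBasis_repr, fourierBasis.repr_apply_apply, coe_fourierBasis]

lemma ext_fourierCoeff {a b : HL2} (h : ∀ n, fourierCoeff (⇑a) n = fourierCoeff (⇑b) n) :
    a = b :=
  fourierBasis.repr.injective <| lp.ext <| funext fun n => by
    simpa only [fourierBasis_repr] using h n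

lemma fourierCoeff_add (v w : HL2) (n : ℤ) :
    fourierCoeff (⇑(v + w)) n = fourierCoeff (⇑v) n + fourierCoeff (⇑w) n := by
  simp only [fourierCoeff_eq_inner, inner_add_right]

lemma fourierCoeff_smul (c : ℂ) (v : HL2) (n : ℤ) :
    fourierCoeff (⇑(c • v)) n = c * fourierCoeff (⇑v) n := by
  simp only [fourierCoeff_eq_inner, inner_smul_right]

lemma fourierCoeff_fourierLp (i n : ℤ) :
    fourierCoeff (⇑(fourierLp 2 i : HL2)) n = (Pi.single i 1 : ℤ → ℂ) n := by
  rw [fourierCoeff_congr_ae (coeFn_fourierLp 2 i), fourierCoeff_fourier]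

lemma isHardy_fourierLp {i : ℤ} (hi : 0 ≤ i) : IsHardy (fourierLp 2 i) := fun n hn => by
  rw [fourierCoeff_fourierLp, Pi.single_eq_of_ne (by omega)]

lemma inner_eq_tsum (a b : HL2) :
    ⟪a, b⟫_ℂ = ∑' n : ℤ, conj (fourierCoeff (⇑a) n) * fourierCoeff (⇑b) n := by
  rw [← fourierBasis.tsum_inner_mul_inner a b]
  refine tsum_congr fun n => ?_
  rw [coe_fourierBasis, fourierCoeff_eq_inner, fourierCoeff_eq_inner, inner_conj_symm]

lemma fourierCoeff_fourier_mul (k n : ℤ) (f : Tc → ℂ) :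
    fourierCoeff (fun x => fourier k x * f x) n = fourierCoeff f (n - k) := by
  have key (x : Tc) : fourier (-n) x • (fourier k x * f x) = fourier (-(n - k)) x • f x := by
    rw [smul_eq_mul, smul_eq_mul, ← mul_assoc, ← fourier_add, neg_sub, sub_eq_neg_add]
  simp only [fourierCoeff, key]

lemma memLp_fourier_mul (k : ℤ) (v : HL2) : MemLp (fun x => fourier k x * v x) 2 haarT := by
  refine MemLp.of_le (Lp.memLp v)
    ((fourier k).continuous.aestronglyMeasurable.mul (Lp.aestronglyMeasurable v)) ?_
  filter_upwards with x
  rw [norm_mul, fourier_apply, Circle.norm_coe, one_mul]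

/-- Multiplication by `fourier k`; `mulFourier 1` is the shift `S`. -/
def mulFourier (k : ℤ) (v : HL2) : HL2 := (memLp_fourier_mul k v).toLp _

lemma coeFn_mulFourier (k : ℤ) (v : HL2) :
    ⇑(mulFourier k v) =ᵐ[haarT] fun x => fourier k x * v x :=
  MemLp.coeFn_toLp _

lemma fourierCoeff_mulFourier (k : ℤ) (v : HL2) (n : ℤ) :
    fourierCoeff (⇑(mulFourier k v)) n = fourierCoeff (⇑v) (n - k) := by
  rw [fourierCoeff_congr_ae (coeFn_mulFourier k v), fourierCoeff_fourier_mul]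

lemma mulFourier_smul (k : ℤ) (c : ℂ) (v : HL2) : mulFourier k (c • v) = c • mulFourier k v :=
  ext_fourierCoeff fun n => by simp only [fourierCoeff_mulFourier, fourierCoeff_smul]

lemma mulFourier_zero (v : HL2) : mulFourier 0 v = v :=
  Lp.ext <| (coeFn_mulFourier 0 v).trans <| .of_forall fun x => by
    simp only [fourier_zero, one_mul]

lemma isHardy_mulFourier {k : ℤ} (hk : 0 ≤ k) {v : HL2} (hv : IsHardy v) :
    IsHardy (mulFourier k v) := fun n hn => by
  rw [fourierCoeff_mulFourier]
  exact hv _ (by omega)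

lemma fourierCoeff_mul_conj (f v : HL2) (n : ℤ) :
    fourierCoeff (fun x => v x * conj (f x)) n = ⟪mulFourier n f, v⟫_ℂ := by
  rw [L2.inner_def]
  refine integral_congr_ae ?_
  filter_upwards [coeFn_mulFourier n f] with x hx
  rw [RCLike.inner_apply, hx, smul_eq_mul, map_mul, ← fourier_neg]
  ring

lemma inner_eq_fourierCoeff_zero (f v : HL2) :
    ⟪f, v⟫_ℂ = fourierCoeff (fun x => v x * conj (f x)) 0 := by
  rw [fourierCoeff_mul_conj, mulFourier_zero]

lemma fourierCoeff_mul_conj_eq_tsum (f v : HL2) (n : ℤ) :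
    fourierCoeff (fun x => v x * conj (f x)) n =
      ∑' m : ℤ, conj (fourierCoeff (⇑f) m) * fourierCoeff (⇑v) (m + n) := by
  rw [fourierCoeff_mul_conj, inner_eq_tsum, ← (Equiv.addRight n).tsum_eq]
  simp only [Equiv.coe_addRight, fourierCoeff_mulFourier, add_sub_cancel_right]

end HardyShift

open HardyShift

lemma IsShiftAdjOf.inner_apply_eq {H K : HL2 → HL2} (hKs : IsShiftAdjOf H K) {a : HL2}
    (ha : IsHardy a) (b : HL2) : ⟪a, K b⟫_ℂ = ⟪mulFourier 1 a, H b⟫_ℂ := by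
  rw [inner_eq_tsum, inner_eq_tsum]
  conv_rhs => rw [← (Equiv.addRight (1 : ℤ)).tsum_eq]
  refine tsum_congr fun n => ?_
  simp only [Equiv.coe_addRight, fourierCoeff_mulFourier, add_sub_cancel_right]
  rcases lt_or_ge n 0 with hn | hn
  · simp only [ha n hn, map_zero, zero_mul]
  · rw [(hKs b).2 n hn]

namespace IsHankelOp

variable {u : HL2} {H K : HL2 → HL2}

lemma isHardy_symbol (hH : IsHankelOp u H) : IsHardy u := hH.2.1

lemma isHardy_apply (hH : IsHankelOp u H) (f : HL2) : IsHardy (H f) := hH.2.2.2.2.2.1 f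

lemma map_add (hH : IsHankelOp u H) (f g : HL2) : H (f + g) = H f + H g := hH.2.2.2.1 f g

lemma map_smul (hH : IsHankelOp u H) (c : ℂ) (f : HL2) : H (c • f) = conj c • H f :=
  hH.2.2.2.2.1 c f

def toCLM (hH : IsHankelOp u H) : HL2 →L⋆[ℂ] HL2 :=
  LinearMap.mkContinuousOfExistsBound
    { toFun := H, map_add' := hH.map_add, map_smul' := hH.map_smul } hH.2.2.1

lemma toCLM_apply (hH : IsHankelOp u H) (f : HL2) : hH.toCLM f = H f := rfl

lemma fourierCoeff_apply (hH : IsHankelOp u H) (f : HL2) {n : ℤ} (hn : 0 ≤ n) :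
    fourierCoeff (⇑(H f)) n = fourierCoeff (fun x => u x * conj (f x)) n := by
  have hint : Integrable (fun x => u x * conj (f x) * conj ((fourierLp 2 n : HL2) x)) haarT := by
    refine (L2.integrable_inner (𝕜 := ℂ) (mulFourier n f) u).congr ?_
    filter_upwards [coeFn_mulFourier n f, coeFn_fourierLp (T := 2 * π) 2 n] with x hf he
    rw [RCLike.inner_apply, hf, he, map_mul]
    ring
  rw [fourierCoeff_eq_inner, hH.2.2.2.2.2.2 f _ (isHardy_fourierLp hn) hint]
  refine integral_congr_ae ?_
  filter_upwards [coeFn_fourierLp (T := 2 * π) 2 n] with x hx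
  rw [hx, smul_eq_mul, ← fourier_neg]
  ring

lemma fourierCoeff_apply_fourierLp (hH : IsHankelOp u H) (n : ℤ) {m : ℤ} (hm : 0 ≤ m) :
    fourierCoeff (⇑(H (fourierLp 2 n))) m = fourierCoeff (⇑u) (m + n) := by
  have he : (fun x => u x * conj ((fourierLp 2 n : HL2) x)) =ᵐ[haarT]
      fun x => fourier (-n) x * u x := by
    filter_upwards [coeFn_fourierLp (T := 2 * π) 2 n] with x hx
    rw [hx, ← fourier_neg, mul_comm]
  rw [hH.fourierCoeff_apply _ hm, fourierCoeff_congr_ae he, fourierCoeff_fourier_mul,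
    sub_neg_eq_add]

lemma apply_fourierLp_zero (hH : IsHankelOp u H) : H (fourierLp 2 0) = u :=
  ext_fourierCoeff fun n => by
    rcases lt_or_ge n 0 with hn | hn
    · rw [hH.isHardy_apply _ n hn, hH.isHardy_symbol n hn]
    · rw [hH.fourierCoeff_apply_fourierLp 0 hn, add_zero]

lemma inner_fourierLp_apply (hH : IsHankelOp u H) {n : ℤ} (hn : 0 ≤ n) {b : HL2}
    (hb : IsHardy b) : ⟪fourierLp 2 n, H b⟫_ℂ = ⟪b, H (fourierLp 2 n)⟫_ℂ := by
  rw [← fourierCoeff_eq_inner, hH.fourierCoeff_apply b hn, fourierCoeff_mul_conj_eq_tsum,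
    inner_eq_tsum]
  refine tsum_congr fun m => ?_
  rcases lt_or_ge m 0 with hm | hm
  · simp only [hb m hm, map_zero, zero_mul]
  · rw [hH.fourierCoeff_apply_fourierLp n hm]

/-- The symmetry extends from the basis by continuity of the antilinear operator `H`. -/
lemma inner_apply_comm (hH : IsHankelOp u H) {a b : HL2} (ha : IsHardy a) (hb : IsHardy b) :
    ⟪a, H b⟫_ℂ = ⟪b, H a⟫_ℂ := by
  have hsum := hasSum_fourier_series_L2 a
  have h₁ := hsum.mapL (innerSLFlip ℂ (H b))
  have h₂ := (hsum.mapL hH.toCLM).mapL (innerSL ℂ b)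
  simp only [innerSLFlip_apply_apply, innerSL_apply_apply, toCLM_apply] at h₁ h₂
  refine h₁.unique ?_
  convert h₂ using 1
  funext i
  rw [inner_smul_left, hH.map_smul, inner_smul_right]
  rcases lt_or_ge i 0 with hi | hi
  · simp only [ha i hi, map_zero, zero_mul]
  · rw [hH.inner_fourierLp_apply hi hb]

lemma apply_mulFourier_one (hH : IsHankelOp u H) (hKs : IsShiftAdjOf H K) (v : HL2) :
    H (mulFourier 1 v) = K v := by
  refine ext_fourierCoeff fun n => ?_
  rcases lt_or_ge n 0 with hn | hn
  · rw [hH.isHardy_apply _ n hn, (hKs v).1 n hn]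
  · have he : (fun x => u x * conj (mulFourier 1 v x)) =ᵐ[haarT]
        fun x => fourier (-1) x * (u x * conj (v x)) := by
      filter_upwards [coeFn_mulFourier 1 v] with x hx
      rw [hx, map_mul, ← fourier_neg]
      ring
    rw [hH.fourierCoeff_apply _ hn, fourierCoeff_congr_ae he, fourierCoeff_fourier_mul,
      sub_neg_eq_add, ← hH.fourierCoeff_apply v (by omega), (hKs v).2 n hn]

lemma apply_eq_mulFourier_add (hH : IsHankelOp u H) (hKs : IsShiftAdjOf H K) (v : HL2) :
    H v = mulFourier 1 (K v) + ⟪v, u⟫_ℂ • fourierLp 2 0 := by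
  refine ext_fourierCoeff fun n => ?_
  rw [fourierCoeff_add, fourierCoeff_smul, fourierCoeff_mulFourier, fourierCoeff_fourierLp]
  rcases lt_trichotomy n 0 with hn | rfl | hn
  · rw [hH.isHardy_apply v n hn, (hKs v).1 _ (by omega), Pi.single_eq_of_ne hn.ne, mul_zero,
      add_zero]
  · rw [(hKs v).1 _ (by omega), Pi.single_eq_same, hH.fourierCoeff_apply v le_rfl,
      inner_eq_fourierCoeff_zero, mul_one, zero_add]
  · rw [Pi.single_eq_of_ne hn.ne', mul_zero, add_zero, (hKs v).2 _ (by omega), sub_add_cancel]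

lemma apply_apply (hH : IsHankelOp u H) (hKs : IsShiftAdjOf H K) (v : HL2) :
    H (H v) = K (K v) + ⟪u, v⟫_ℂ • u := by
  conv_lhs => rw [hH.apply_eq_mulFourier_add hKs v]
  rw [hH.map_add, hH.map_smul, hH.apply_mulFourier_one hKs, hH.apply_fourierLp_zero,
    inner_conj_symm]

lemma inner_apply_apply_comm (hH : IsHankelOp u H) {a b : HL2} (ha : IsHardy a)
    (hb : IsHardy b) : ⟪a, H (H b)⟫_ℂ = ⟪H (H a), b⟫_ℂ := by
  rw [hH.inner_apply_comm ha (hH.isHardy_apply b), ← inner_conj_symm,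
    hH.inner_apply_comm (hH.isHardy_apply a) hb, inner_conj_symm]

lemma inner_symbol_eq_zero_of_eigen (hH : IsHankelOp u H) (hKs : IsShiftAdjOf H K) {s : ℝ}
    {f w : HL2} (hf : IsHardy f) (hKf : K (K f) = (s : ℂ) ^ 2 • f) (huf : ⟪u, f⟫_ℂ ≠ 0)
    (hw : IsHardy w) (hHw : H (H w) = (s : ℂ) ^ 2 • w) : ⟪w, u⟫_ℂ = 0 := by
  have h₁ : ⟪w, H (H f)⟫_ℂ = (s : ℂ) ^ 2 * ⟪w, f⟫_ℂ + ⟪u, f⟫_ℂ * ⟪w, u⟫_ℂ := by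
    rw [hH.apply_apply hKs, hKf, inner_add_right, inner_smul_right, inner_smul_right]
  have h₂ : ⟪w, H (H f)⟫_ℂ = (s : ℂ) ^ 2 * ⟪w, f⟫_ℂ := by
    rw [hH.inner_apply_apply_comm hw hf, hHw, inner_smul_left, map_pow, conj_ofReal]
  have h₃ : ⟪u, f⟫_ℂ * ⟪w, u⟫_ℂ = 0 := by linear_combination h₁.symm.trans h₂
  exact (mul_eq_zero.mp h₃).resolve_left huf

lemma inner_shiftAdj_comm (hH : IsHankelOp u H) (hKs : IsShiftAdjOf H K) {a b : HL2}
    (ha : IsHardy a) (hb : IsHardy b) : ⟪a, K b⟫_ℂ = ⟪b, K a⟫_ℂ := by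
  rw [hKs.inner_apply_eq ha, hH.inner_apply_comm (isHardy_mulFourier zero_le_one ha) hb,
    hH.apply_mulFourier_one hKs]

lemma apply_apply_mulFourier_one (hH : IsHankelOp u H) (hKs : IsShiftAdjOf H K) {c : ℂ}
    {h : HL2} (hh : IsHardy h) (hKh : K (K h) = c • h) (hKuh : ⟪K u, h⟫_ℂ = 0) :
    H (H (mulFourier 1 h)) = c • mulFourier 1 h := by
  have hKhu : ⟪K h, u⟫_ℂ = 0 := by
    rw [← inner_conj_symm, ← hH.inner_shiftAdj_comm hKs hh hH.isHardy_symbol, inner_conj_symm,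
      hKuh]
  rw [hH.apply_mulFourier_one hKs, hH.apply_eq_mulFourier_add hKs, hKh, mulFourier_smul, hKhu,
    zero_smul, add_zero]

lemma exists_mulFourier_one_eq (hH : IsHankelOp u H) (hKs : IsShiftAdjOf H K) {c : ℂ}
    (hc : c ≠ 0) {g : HL2} (hHg : H (H g) = c • g) (hHgu : ⟪H g, u⟫_ℂ = 0) :
    ∃ h : HL2, (IsHardy h ∧ K (K h) = c • h ∧ ⟪K u, h⟫_ℂ = 0) ∧ mulFourier 1 h = g := by
  have hSKHg : mulFourier 1 (K (H g)) = c • g := by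
    rw [← hHg, hH.apply_eq_mulFourier_add hKs (H g), hHgu, zero_smul, add_zero]
  have hSh : mulFourier 1 (c⁻¹ • K (H g)) = g := by
    rw [mulFourier_smul, hSKHg, inv_smul_smul₀ hc]
  have hKh : K (c⁻¹ • K (H g)) = H g := by rw [← hH.apply_mulFourier_one hKs, hSh]
  have hh : IsHardy (c⁻¹ • K (H g)) := fun n hn => by
    rw [fourierCoeff_smul, (hKs _).1 n hn, mul_zero]
  refine ⟨_, ⟨hh, ?_, ?_⟩, hSh⟩
  · rw [hKh, smul_inv_smul₀ hc]
  · rw [← inner_conj_symm, hH.inner_shiftAdj_comm hKs hh hH.isHardy_symbol, hKh,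
      inner_conj_symm, hHgu]

end IsHankelOp

theorem shift_maps_EK_perp_Kuu_onto_EH_general
    (u : HL2) (H K : HL2 → HL2)
    (hH : IsHankelOp (⇑u) H) (hKs : IsShiftAdjOf H K)
    (s : ℝ) (hs : 0 < s)
    (hdom : ∃ f : HL2, IsHardy f ∧ K (K f) = ((s : ℂ) ^ 2) • f ∧ (inner ℂ u f : ℂ) ≠ 0) :
    {g : HL2 | ∃ h : HL2,
        (IsHardy h ∧ K (K h) = ((s : ℂ) ^ 2) • h ∧ (inner ℂ (K u) h : ℂ) = 0) ∧
        ⇑g =ᵐ[haarT] fun x => fourier 1 x * h x} =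
    {g : HL2 | IsHardy g ∧ H (H g) = ((s : ℂ) ^ 2) • g} := by
  obtain ⟨f, hf, hKf, huf⟩ := hdom
  ext g
  constructor
  · rintro ⟨h, ⟨hh, hKh, hKuh⟩, hg⟩
    obtain rfl : g = mulFourier 1 h := Lp.ext (hg.trans (coeFn_mulFourier 1 h).symm)
    exact ⟨isHardy_mulFourier zero_le_one hh, hH.apply_apply_mulFourier_one hKs hh hKh hKuh⟩
  · rintro ⟨-, hHg⟩
    have hHHg : H (H (H g)) = (s : ℂ) ^ 2 • H g := by
      rw [hHg, hH.map_smul, map_pow, conj_ofReal]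
    have hHgu := hH.inner_symbol_eq_zero_of_eigen hKs hf hKf huf (hH.isHardy_apply g) hHHg
    obtain ⟨h, hmem, rfl⟩ :=
      hH.exists_mulFourier_one_eq hKs (pow_ne_zero 2 (ofReal_ne_zero.mpr hs.ne')) hHg hHgu
    exact ⟨h, hmem, coeFn_mulFourier 1 h⟩

/-- in the `K`-dominant case, the shift `S` maps `E_K(s) ∩ (K_u u)^⊥`
onto `E_H(s)`. -/
theorem shift_maps_EK_perp_Kuu_onto_EH
    (u : HL2) (hu : IsHardy u) (H K : HL2 → HL2)
    (hH : IsHankelOp (⇑u) H) (hKs : IsShiftAdjOf H K)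
    (s : ℝ) (hs : 0 < s)
    (hdom : ∃ f : HL2, IsHardy f ∧ K (K f) = ((s : ℂ) ^ 2) • f ∧ (inner ℂ u f : ℂ) ≠ 0) :
    {g : HL2 | ∃ h : HL2,
        (IsHardy h ∧ K (K h) = ((s : ℂ) ^ 2) • h ∧ (inner ℂ (K u) h : ℂ) = 0) ∧
        ⇑g =ᵐ[haarT] fun x => fourier 1 x * h x} =
    {g : HL2 | IsHardy g ∧ H (H g) = ((s : ℂ) ^ 2) • g} :=
  shift_maps_EK_perp_Kuu_onto_EH_general u H K hH hKs s hs hdom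

end
end

section
/- Let θ be an inner function on the unit disk 𝔻 and w ∈ 𝔻. Define α_w(z) = (w - z)/(1 - conj(w)z) and g_w(z) = sqrt(1 - |w|²)/(1 - conj(w)z). Then multiplication by g_w∘θ is an isometry of the model space K_θ onto the model space K_{α_w∘θ}, i.e., (g_w∘θ)K_θ = K_{α_w∘θ} and ‖(g_w∘θ)f‖ = ‖f‖ for all f ∈ K_θ. -/
open MeasureTheory Complex Real ComplexConjugate AddCircle

noncomputable section

/-! Bounded Hardy functions form an algebra `H^∞` that multiplies `H²` into itself (a coefficient
of `u v` with negative index is a continuous functional of `v ∈ H²` vanishing on the analytic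
exponentials), and `(1 - w̄θ)⁻¹ ∈ H^∞` because the tails of its geometric series are uniformly
small. On the circle, where `|θ| = 1`, one has `|g_w∘θ|² = 1 + 2 Re (θ u)` with
`u = w̄ / (1 - w̄θ) ∈ H^∞`; for `f ⊥ θH²` the cross terms `⟨θ u f, f⟩` vanish, so multiplication
by `g_w∘θ` is isometric on `K_θ`. Orthogonality to `(α_w∘θ) H²` is transported by the identity
`conj (α_w∘θ) · g_w∘θ = -conj (θ · g_w∘θ)`, and conversely `G ∈ K_{α_w∘θ}` is `(g_w∘θ) f` with
`f = (1 - w̄θ) G / √(1 - |w|²) ∈ K_θ`, using `conj θ · (1 - w̄θ) = -conj (α_w∘θ · (1 - w̄θ))`.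
-/

open scoped ENNReal

lemma norm_fourier_apply {T : ℝ} (n : ℤ) (x : AddCircle T) : ‖fourier n x‖ = 1 := by
  simp [fourier_apply, Circle.norm_coe]

lemma norm_fourierCoeff_le_of_ae_norm_le {T : ℝ} [Fact (0 < T)] {u : AddCircle T → ℂ} {C : ℝ}
    (hu : ∀ᵐ x ∂haarAddCircle, ‖u x‖ ≤ C) (n : ℤ) : ‖fourierCoeff u n‖ ≤ C := by
  have h := norm_integral_le_of_norm_le_const (μ := haarAddCircle)
    (hu.mono fun x hx => (by rwa [norm_smul, norm_fourier_apply, one_mul] :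
      ‖fourier (-n) x • u x‖ ≤ C))
  rwa [probReal_univ, mul_one] at h

lemma isHardyFun_const (c : ℂ) : IsHardyFun fun _ => c := by
  intro n hn
  have h := fourierCoeff.const_mul (fourier (T := 2 * π) 0) c n
  simp only [fourier_zero, mul_one] at h
  rw [h, fourierCoeff_fourier, Pi.single_eq_of_ne hn.ne, mul_zero]

lemma IsHardyFun.add {u v : Tc → ℂ} (hu : IsHardyFun u) (hv : IsHardyFun v)
    (hu' : Integrable u haarT) (hv' : Integrable v haarT) : IsHardyFun (u + v) := by
  intro n hn
  rw [fourierCoeff.add hu' hv', Pi.add_apply, hu n hn, hv n hn, add_zero]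

lemma inner_eq_zero_of_isHardy {Φ f : HL2}
    (hΦ : ∀ i : ℤ, 0 ≤ i → inner ℂ Φ (fourierLp 2 i) = 0) (hf : IsHardy f) : inner ℂ Φ f = 0 := by
  rw [← fourierBasis.tsum_inner_mul_inner Φ f]
  refine (tsum_congr fun i => ?_).trans tsum_zero
  simp only [coe_fourierBasis]
  rcases lt_or_ge i 0 with hi | hi
  · rw [← coe_fourierBasis, ← HilbertBasis.repr_apply_apply, fourierBasis_repr, hf i hi,
      mul_zero]
  · rw [hΦ i hi, zero_mul]

lemma isHardy_toLp {v : Tc → ℂ} (hv : MemLp v 2 haarT) (hvH : IsHardyFun v) :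
    IsHardy (hv.toLp v) := by
  intro n hn
  rw [fourierCoeff_congr_ae hv.coeFn_toLp]
  exact hvH n hn

lemma IsHardyFun.mul {u v : Tc → ℂ} (hu : MemLp u ∞ haarT) (huH : IsHardyFun u)
    (hv : MemLp v 2 haarT) (hvH : IsHardyFun v) : IsHardyFun fun x => u x * v x := by
  intro n hn
  have hφ : MemLp (fun x => conj (fourier (-n) x * u x)) 2 haarT :=
    (hu.mono_exponent le_top).of_le
      (continuous_conj.comp_aestronglyMeasurable
        ((fourier (-n)).continuous.aestronglyMeasurable.mul hu.1))
      (ae_of_all _ fun x => by rw [RCLike.norm_conj, norm_mul, norm_fourier_apply, one_mul])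
  have hinner : ∀ g : HL2, inner ℂ (hφ.toLp _) g = ∫ x, fourier (-n) x * u x * g x ∂haarT := by
    intro g
    rw [L2.inner_def]
    refine integral_congr_ae ?_
    filter_upwards [hφ.coeFn_toLp] with x hx
    rw [RCLike.inner_apply, hx, conj_conj, mul_comm]
  have hbasis : ∀ i : ℤ, 0 ≤ i → inner ℂ (hφ.toLp _) (fourierLp 2 i) = 0 := by
    intro i hi
    rw [hinner, ← huH (n - i) (by omega)]
    refine integral_congr_ae ?_
    filter_upwards [coeFn_fourierLp 2 i] with x hx
    rw [hx, smul_eq_mul, show -(n - i) = -n + i by ring, fourier_add]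
    ring
  calc fourierCoeff (fun x => u x * v x) n = inner ℂ (hφ.toLp _) (hv.toLp v) := by
        rw [hinner]
        refine integral_congr_ae ?_
        filter_upwards [hv.coeFn_toLp] with x hx
        rw [hx, smul_eq_mul, mul_assoc]
    _ = 0 := inner_eq_zero_of_isHardy hbasis (isHardy_toLp hv hvH)

def hardyInfty : Subalgebra ℂ (Tc → ℂ) where
  carrier := {u | MemLp u ∞ haarT ∧ IsHardyFun u}
  mul_mem' hu hv := ⟨hv.1.mul hu.1, hu.2.mul hu.1 (hv.1.mono_exponent le_top) hv.2⟩
  add_mem' hu hv :=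
    ⟨hu.1.add hv.1, hu.2.add hv.2 (hu.1.integrable le_top) (hv.1.integrable le_top)⟩
  algebraMap_mem' c := ⟨memLp_top_const c, isHardyFun_const c⟩

lemma one_sub_inv_eq_geom_sum_add {z : ℂ} (hz : z ≠ 1) (N : ℕ) :
    (1 - z)⁻¹ = ∑ j ∈ Finset.range N, z ^ j + z ^ N * (1 - z)⁻¹ := by
  have h : (1 : ℂ) - z ≠ 0 := sub_ne_zero.mpr hz.symm
  field_simp
  linear_combination geom_sum_mul z N

lemma one_sub_le_norm_one_sub {z : ℂ} {r : ℝ} (hz : ‖z‖ ≤ r) : 1 - r ≤ ‖1 - z‖ := by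
  have := norm_sub_norm_le (1 : ℂ) z
  rw [norm_one] at this
  linarith

lemma inv_one_sub_mem_hardyInfty {ψ : Tc → ℂ} (hψ : ψ ∈ hardyInfty) {r : ℝ} (hr0 : 0 ≤ r)
    (hr1 : r < 1) (hψr : ∀ᵐ x ∂haarT, ‖ψ x‖ ≤ r) : (1 - ψ)⁻¹ ∈ hardyInfty := by
  have hinv : ∀ᵐ x ∂haarT, ‖(1 - ψ x)⁻¹‖ ≤ (1 - r)⁻¹ := hψr.mono fun x hx => by
    rw [norm_inv]
    exact inv_anti₀ (by linarith) (one_sub_le_norm_one_sub hx)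
  have hinvL : MemLp (1 - ψ)⁻¹ ∞ haarT :=
    memLp_top_of_bound (aemeasurable_const.sub hψ.1.1.aemeasurable).inv.aestronglyMeasurable _
      hinv
  refine ⟨hinvL, fun n hn => ?_⟩
  have htail : ∀ N : ℕ, ‖fourierCoeff (1 - ψ)⁻¹ n‖ ≤ r ^ N * (1 - r)⁻¹ := by
    intro N
    have hS : ∑ j ∈ Finset.range N, ψ ^ j ∈ hardyInfty := sum_mem fun j _ => pow_mem hψ j
    have hR : MemLp (ψ ^ N * (1 - ψ)⁻¹) ∞ haarT := hinvL.mul (pow_mem hψ N).1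
    have hsplit : (1 - ψ)⁻¹ =ᵐ[haarT] ∑ j ∈ Finset.range N, ψ ^ j + ψ ^ N * (1 - ψ)⁻¹ :=
      hψr.mono fun x hx => by
        have hx1 : ψ x ≠ 1 := fun h => by rw [h, norm_one] at hx; linarith
        simpa using one_sub_inv_eq_geom_sum_add hx1 N
    rw [fourierCoeff_congr_ae hsplit,
      fourierCoeff.add (hS.1.integrable le_top) (hR.integrable le_top), Pi.add_apply,
      hS.2 n hn, zero_add]
    refine norm_fourierCoeff_le_of_ae_norm_le (hψr.and hinv |>.mono fun x hx => ?_) n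
    rw [Pi.mul_apply, norm_mul, Pi.pow_apply, norm_pow]
    exact mul_le_mul (pow_le_pow_left₀ (norm_nonneg _) hx.1 N) hx.2 (norm_nonneg _)
      (by positivity)
  have hlim : Filter.Tendsto (fun N : ℕ => r ^ N * (1 - r)⁻¹) Filter.atTop (nhds 0) := by
    simpa using (tendsto_pow_atTop_nhds_zero_of_lt_one hr0 hr1).mul_const (1 - r)⁻¹
  exact norm_le_zero_iff.mp (ge_of_tendsto hlim (Filter.Eventually.of_forall htail))

lemma isHardy_of_ae_eq_mul {u : Tc → ℂ} (hu : u ∈ hardyInfty) {f F : HL2} (hf : IsHardy f)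
    (hF : ⇑F =ᵐ[haarT] fun x => u x * f x) : IsHardy F := by
  intro n hn
  rw [fourierCoeff_congr_ae hF]
  exact hu.2.mul hu.1 (Lp.memLp f) hf n hn

lemma inner_eq_mul_inner_of_ae {a b c d : HL2} {k : ℂ}
    (h : ∀ᵐ x ∂haarT, conj (a x) * b x = k * (conj (c x) * d x)) :
    inner ℂ a b = k * inner ℂ c d := by
  rw [L2.inner_def, L2.inner_def, ← integral_const_mul]
  refine integral_congr_ae (h.mono fun x hx => ?_)
  simp only [RCLike.inner_apply]
  linear_combination hx

lemma MemK.inner_eq_zero {Θ p : Tc → ℂ} {f q : HL2} (hf : MemK Θ f) (hp : MemLp p 2 haarT)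
    (hpH : IsHardyFun p) (hq : ⇑q =ᵐ[haarT] fun x => Θ x * p x) : inner ℂ q f = 0 :=
  hf.2 _ q (isHardy_toLp hp hpH) (hq.trans (hp.coeFn_toLp.mono fun x hx => by simp only [hx]))

lemma MemK.norm_eq_of_ae_eq_mul {Θ g u : Tc → ℂ} {f F : HL2} (hf : MemK Θ f)
    (hΘ : MemLp Θ ∞ haarT) (hu : u ∈ hardyInfty)
    (hg : ∀ᵐ x ∂haarT, conj (g x) * g x = 1 + Θ x * u x + conj (Θ x * u x))
    (hF : ⇑F =ᵐ[haarT] fun x => g x * f x) : ‖F‖ = ‖f‖ := by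
  have hp : MemLp (fun x => u x * f x) 2 haarT := (Lp.memLp f).mul' hu.1
  obtain ⟨Q, hQ⟩ : ∃ Q : HL2, ⇑Q =ᵐ[haarT] fun x => Θ x * (u x * f x) :=
    ⟨_, (hp.mul' hΘ).coeFn_toLp⟩
  have hQf : inner ℂ Q f = 0 := hf.inner_eq_zero hp (hu.2.mul hu.1 (Lp.memLp f) hf.1) hQ
  have hFF : inner ℂ F F = inner ℂ f f + inner ℂ f Q + inner ℂ Q f := by
    simp only [L2.inner_def]
    rw [← integral_add (L2.integrable_inner f f) (L2.integrable_inner f Q),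
      ← integral_add ((L2.integrable_inner f f).add (L2.integrable_inner f Q))
        (L2.integrable_inner Q f)]
    refine integral_congr_ae ?_
    filter_upwards [hF, hQ, hg] with x hFx hQx hgx
    simp only [RCLike.inner_apply, hFx, hQx, map_mul] at hgx ⊢
    linear_combination (conj (f x) * f x) * hgx
  rw [inner_eq_zero_symm.mp hQf, hQf, add_zero, add_zero, inner_self_eq_norm_sq_to_K,
    inner_self_eq_norm_sq_to_K] at hFF
  exact (pow_left_inj₀ (norm_nonneg F) (norm_nonneg f) two_ne_zero).mp (by exact_mod_cast hFF)

-- `α_w` and `g_w` of the paper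
def diskAut (w z : ℂ) : ℂ := (w - z) / (1 - conj w * z)

def crofootFactor (w z : ℂ) : ℂ := (Real.sqrt (1 - ‖w‖ ^ 2) : ℂ) / (1 - conj w * z)

section Pointwise

variable {w z : ℂ}

lemma one_sub_conj_mul_ne_zero (hw : ‖w‖ < 1) (hz : ‖z‖ ≤ 1) : 1 - conj w * z ≠ 0 := by
  refine sub_ne_zero.mpr fun h => ?_
  have : ‖conj w * z‖ < 1 := by
    rw [norm_mul, RCLike.norm_conj]
    nlinarith [norm_nonneg w, norm_nonneg z]
  rw [← h, norm_one] at this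
  exact this.false

lemma crofootFactor_mul_one_sub_conj_mul (hw : ‖w‖ < 1) (hz : ‖z‖ ≤ 1) :
    crofootFactor w z * (1 - conj w * z) = Real.sqrt (1 - ‖w‖ ^ 2) :=
  div_mul_cancel₀ _ (one_sub_conj_mul_ne_zero hw hz)

lemma mul_conj_of_norm_eq_one (hz : ‖z‖ = 1) : z * conj z = 1 := by
  rw [mul_conj, normSq_eq_norm_sq, hz, one_pow, ofReal_one]

lemma conj_crofootFactor_mul_self (hw : ‖w‖ < 1) (hz : ‖z‖ = 1) :
    conj (crofootFactor w z) * crofootFactor w z =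
      1 + z * (conj w * (1 - conj w * z)⁻¹) + conj (z * (conj w * (1 - conj w * z)⁻¹)) := by
  have hb := one_sub_conj_mul_ne_zero hw hz.le
  have hb' : 1 - w * conj z ≠ 0 := by simpa using (map_ne_zero (starRingEnd ℂ)).mpr hb
  have hc : (Real.sqrt (1 - ‖w‖ ^ 2) : ℂ) ^ 2 = 1 - w * conj w := by
    rw [← ofReal_pow, Real.sq_sqrt (by nlinarith [norm_nonneg w]), mul_conj,
      normSq_eq_norm_sq]
    push_cast
    ring
  simp only [crofootFactor, map_div₀, map_mul, map_sub, map_one, conj_ofReal, conj_conj,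
    map_inv₀]
  field_simp
  linear_combination hc + (w * conj w) * mul_conj_of_norm_eq_one hz

lemma conj_diskAut_mul_crofootFactor (hw : ‖w‖ < 1) (hz : ‖z‖ = 1) :
    conj (diskAut w z) * crofootFactor w z = -conj (z * crofootFactor w z) := by
  have hb := one_sub_conj_mul_ne_zero hw hz.le
  have hnum : w - z = -z * conj (1 - conj w * z) := by
    simp only [map_sub, map_one, map_mul, conj_conj]
    linear_combination -w * mul_conj_of_norm_eq_one hz
  rw [diskAut, crofootFactor, hnum]
  simp only [map_div₀, map_mul, map_neg, conj_conj, conj_ofReal]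
  field_simp

lemma conj_mul_one_sub_conj_mul (hw : ‖w‖ < 1) (hz : ‖z‖ = 1) :
    conj z * (1 - conj w * z) = -conj (diskAut w z * (1 - conj w * z)) := by
  rw [diskAut, div_mul_cancel₀ _ (one_sub_conj_mul_ne_zero hw hz.le)]
  simp only [map_sub]
  linear_combination -conj w * mul_conj_of_norm_eq_one hz

end Pointwise

section Crofoot

variable {θ : Tc → ℂ} {w : ℂ}

lemma IsInnerF.memLp_top (hθ : IsInnerF θ) : MemLp θ ∞ haarT :=
  memLp_top_of_bound hθ.1 1 (hθ.2.1.mono fun _ hx => hx.le)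

lemma IsInnerF.mem_hardyInfty (hθ : IsInnerF θ) : θ ∈ hardyInfty := ⟨hθ.memLp_top, hθ.2.2⟩

lemma IsInnerF.const_mul_mem_hardyInfty (hθ : IsInnerF θ) :
    (fun x => conj w * θ x) ∈ hardyInfty :=
  hardyInfty.smul_mem hθ.mem_hardyInfty (conj w)

lemma IsInnerF.inv_one_sub_conj_mul_mem_hardyInfty (hθ : IsInnerF θ) (hw : ‖w‖ < 1) :
    (fun x => (1 - conj w * θ x)⁻¹) ∈ hardyInfty :=
  inv_one_sub_mem_hardyInfty hθ.const_mul_mem_hardyInfty (norm_nonneg w) hw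
    (hθ.2.1.mono fun _ hx => by simp [hx])

lemma IsInnerF.crofootFactor_comp_mem_hardyInfty (hθ : IsInnerF θ) (hw : ‖w‖ < 1) :
    (fun x => crofootFactor w (θ x)) ∈ hardyInfty := by
  convert hardyInfty.smul_mem (hθ.inv_one_sub_conj_mul_mem_hardyInfty hw)
    (Real.sqrt (1 - ‖w‖ ^ 2) : ℂ) using 1
  ext x
  simp [crofootFactor, div_eq_mul_inv]

lemma IsInnerF.diskAut_comp_mem_hardyInfty (hθ : IsInnerF θ) (hw : ‖w‖ < 1) :
    (fun x => diskAut w (θ x)) ∈ hardyInfty := by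
  convert mul_mem (sub_mem (algebraMap_mem hardyInfty w) hθ.mem_hardyInfty)
    (hθ.inv_one_sub_conj_mul_mem_hardyInfty hw) using 1
  ext x
  simp [diskAut, div_eq_mul_inv]

theorem IsInnerF.norm_crofootFactor_mul (hθ : IsInnerF θ) (hw : ‖w‖ < 1) {f F : HL2}
    (hf : MemK θ f) (hF : ⇑F =ᵐ[haarT] fun x => crofootFactor w (θ x) * f x) : ‖F‖ = ‖f‖ :=
  hf.norm_eq_of_ae_eq_mul hθ.memLp_top
    (hardyInfty.smul_mem (hθ.inv_one_sub_conj_mul_mem_hardyInfty hw) (conj w))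
    (hθ.2.1.mono fun _ hx => conj_crofootFactor_mul_self hw hx) hF

theorem IsInnerF.memK_diskAut_of_crofootFactor_mul (hθ : IsInnerF θ) (hw : ‖w‖ < 1)
    {f F : HL2} (hf : MemK θ f) (hF : ⇑F =ᵐ[haarT] fun x => crofootFactor w (θ x) * f x) :
    MemK (fun x => diskAut w (θ x)) F := by
  have hg := hθ.crofootFactor_comp_mem_hardyInfty hw
  refine ⟨isHardy_of_ae_eq_mul hg hf.1 hF, fun h v hh hv => ?_⟩
  have hp : MemLp (fun x => crofootFactor w (θ x) * h x) 2 haarT := (Lp.memLp h).mul' hg.1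
  obtain ⟨q, hq⟩ : ∃ q : HL2, ⇑q =ᵐ[haarT] fun x => θ x * (crofootFactor w (θ x) * h x) :=
    ⟨_, (hp.mul' hθ.memLp_top).coeFn_toLp⟩
  calc inner ℂ v F = -1 * inner ℂ q f := by
        refine inner_eq_mul_inner_of_ae ?_
        filter_upwards [hv, hF, hq, hθ.2.1] with x hvx hFx hqx hθx
        rw [hvx, hFx, hqx]
        have key := conj_diskAut_mul_crofootFactor hw hθx
        simp only [map_mul] at key ⊢
        linear_combination (conj (h x) * f x) * key
    _ = 0 := by rw [hf.inner_eq_zero hp (hg.2.mul hg.1 (Lp.memLp h) hh) hq, mul_zero]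

theorem IsInnerF.exists_memK_crofootFactor_mul_eq (hθ : IsInnerF θ) (hw : ‖w‖ < 1) {G : HL2}
    (hG : MemK (fun x => diskAut w (θ x)) G) :
    ∃ f : HL2, MemK θ f ∧ ⇑G =ᵐ[haarT] fun x => crofootFactor w (θ x) * f x := by
  set c : ℂ := ((Real.sqrt (1 - ‖w‖ ^ 2) : ℝ) : ℂ)
  have hc : c ≠ 0 := ofReal_ne_zero.mpr (Real.sqrt_pos.mpr (by nlinarith [norm_nonneg w])).ne'
  have hb : (fun x => 1 - conj w * θ x) ∈ hardyInfty :=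
    sub_mem (one_mem hardyInfty) hθ.const_mul_mem_hardyInfty
  have hu : (fun x => c⁻¹ * (1 - conj w * θ x)) ∈ hardyInfty := hardyInfty.smul_mem hb c⁻¹
  have hp : MemLp (fun x => c⁻¹ * (1 - conj w * θ x) * G x) 2 haarT := (Lp.memLp G).mul' hu.1
  refine ⟨hp.toLp _, ⟨isHardy_of_ae_eq_mul hu hG.1 hp.coeFn_toLp, fun h v hh hv => ?_⟩, ?_⟩
  · have hp' : MemLp (fun x => (1 - conj w * θ x) * h x) 2 haarT := (Lp.memLp h).mul' hb.1
    obtain ⟨q, hq⟩ : ∃ q : HL2,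
        ⇑q =ᵐ[haarT] fun x => diskAut w (θ x) * ((1 - conj w * θ x) * h x) :=
      ⟨_, (hp'.mul' (hθ.diskAut_comp_mem_hardyInfty hw).1).coeFn_toLp⟩
    calc inner ℂ v (hp.toLp _) = -c⁻¹ * inner ℂ q G := by
          refine inner_eq_mul_inner_of_ae ?_
          filter_upwards [hv, hp.coeFn_toLp, hq, hθ.2.1] with x hvx hfx hqx hθx
          rw [hvx, hfx, hqx]
          have key := conj_mul_one_sub_conj_mul hw hθx
          simp only [map_mul] at key ⊢
          linear_combination (c⁻¹ * conj (h x) * G x) * key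
      _ = 0 := by rw [hG.inner_eq_zero hp' (hb.2.mul hb.1 (Lp.memLp h) hh) hq, mul_zero]
  · filter_upwards [hp.coeFn_toLp, hθ.2.1] with x hx hθx
    rw [hx]
    have key : crofootFactor w (θ x) * (1 - conj w * θ x) = c :=
      crofootFactor_mul_one_sub_conj_mul hw hθx.le
    linear_combination -(c⁻¹ * G x) * key - G x * mul_inv_cancel₀ hc

end Crofoot

/-- Crofoot transform: for `θ` inner and `w` in the disk, multiplication by
`g_w∘θ`, where `g_w(z) = √(1-|w|²)/(1 - conj(w)z)`, is an isometry of `K_θ` onto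
`K_{α_w∘θ}`, where `α_w(z) = (w-z)/(1 - conj(w)z)`. -/
theorem crofoot_transform
    (θ : Tc → ℂ) (hθ : IsInnerF θ) (w : ℂ) (hw : ‖w‖ < 1) :
    (∀ f F : HL2, MemK θ f →
      (⇑F =ᵐ[haarT] fun x => ((Real.sqrt (1 - ‖w‖ ^ 2) : ℂ) / (1 - conj w * θ x)) * f x) →
      ‖F‖ = ‖f‖ ∧ MemK (fun x => (w - θ x) / (1 - conj w * θ x)) F) ∧
    (∀ G : HL2, MemK (fun x => (w - θ x) / (1 - conj w * θ x)) G →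
      ∃ f : HL2, MemK θ f ∧
        ⇑G =ᵐ[haarT] fun x => ((Real.sqrt (1 - ‖w‖ ^ 2) : ℂ) / (1 - conj w * θ x)) * f x) :=
  ⟨fun _ _ hf hF => ⟨hθ.norm_crofootFactor_mul hw hf hF,
      hθ.memK_diskAut_of_crofootFactor_mul hw hf hF⟩,
    fun _ hG => hθ.exists_memK_crofootFactor_mul_eq hw hG⟩
end
end
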